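/- For γ ∈ [3,5], φ(γ) ≥ γ·(2/3)^{(γ-1)/2} ≥ 2, and by the recursion φ(γ+2) = 1 + ((γ+1)/(2γ))φ(γ) one obtains φ(γ) ≥ 2 for all γ ≥ 3. -/

import Mathlib

/-!
Write the integrand of `I(γ)` as `w(s) t(s)^θ` with `w(s) = (s+1)^{-3/2}`, `t(s) = (s+2)/(s+1)` and
`θ = (γ-1)/2`. For `θ ≥ 1` the tangent line of `t ↦ t^θ` at `4/3 = I(3)/I(1)` gives
`I(γ) ≥ (4/3)^θ ((1-θ) I(1) + (3θ/4) I(3)) = 2 (4/3)^θ` (Jensen for the weight `w`), that is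
`φ(γ) ≥ γ (2/3)^θ`; on `[3,5]` the convexity of `θ ↦ (3/2)^θ` makes this at least `2`.
Integrating `d/ds [(s+1)^{-(γ+2)/2} (s+2)^{(γ+1)/2}]` over `(0, ∞)` gives the recursion
`φ(γ+2) = 1 + (γ+1)/(2γ) φ(γ)`, which preserves `φ ≥ 2` and so carries the bound from `[3,5]`
to `[3,∞)`.
-/

open Real MeasureTheory Set Filter Topology

theorem integral_add_rpow_Ioi_of_lt {a c m : ℝ} (ha : a < -1) (hc : -m < c) :
    ∫ x in Ioi c, (x + m) ^ a = -(c + m) ^ (a + 1) / (a + 1) := by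
  have ha' : a + 1 ≠ 0 := by linarith
  have hd : ∀ x ∈ Ici c, HasDerivAt (fun t ↦ (t + m) ^ (a + 1) / (a + 1)) ((x + m) ^ a) x := by
    intro x hx
    have hxm : x + m ≠ 0 := by linarith [mem_Ici.mp hx]
    refine ((((hasDerivAt_id' x).add_const m).rpow_const (p := a + 1)
      (Or.inl hxm)).div_const (a + 1)).congr_deriv ?_
    rw [add_sub_cancel_right]
    field_simp
  have ht : Tendsto (fun t ↦ (t + m) ^ (a + 1) / (a + 1)) atTop (𝓝 (0 / (a + 1))) := by
    rw [← neg_neg (a + 1)]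
    exact ((tendsto_rpow_neg_atTop (by linarith)).comp
      (tendsto_atTop_add_const_right _ m tendsto_id)).div_const _
  rw [integral_Ioi_of_hasDerivAt_of_tendsto' hd (integrableOn_add_rpow_Ioi_of_lt ha hc) ht]
  ring

theorem add_one_rpow_mul_add_two_rpow_le {s : ℝ} (hs : 0 ≤ s) (a : ℝ) {b : ℝ} (hb : 0 ≤ b) :
    (s + 1) ^ a * (s + 2) ^ b ≤ 2 ^ b * (s + 1) ^ (a + b) := by
  have hs1 : 0 < s + 1 := by linarith
  calc (s + 1) ^ a * (s + 2) ^ b ≤ (s + 1) ^ a * (2 * (s + 1)) ^ b := by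
        gcongr
        linarith
    _ = 2 ^ b * (s + 1) ^ (a + b) := by
        rw [mul_rpow zero_le_two hs1.le, rpow_add hs1]
        ring

theorem mul_one_add_mul_le_rpow {c t θ : ℝ} (hc : 0 < c) (ht : 0 ≤ t) (hθ : 1 ≤ θ) :
    c ^ θ * (1 + θ * (t / c - 1)) ≤ t ^ θ := by
  have bernoulli := one_add_mul_self_le_rpow_one_add (by linarith [div_nonneg ht hc.le] :
    -1 ≤ t / c - 1) hθ
  rw [add_sub_cancel, div_rpow ht hc.le, le_div_iff₀' (by positivity)] at bernoulli
  exact bernoulli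

theorem two_le_mul_two_thirds_rpow {γ : ℝ} (h3 : 3 ≤ γ) (h5 : γ ≤ 5) :
    2 ≤ γ * (2 / 3) ^ ((γ - 1) / 2) := by
  set θ := (γ - 1) / 2 with hθ
  have chord : (3 / 2 : ℝ) ^ θ ≤ (2 - θ) * (3 / 2) + (θ - 1) * (9 / 4) := by
    have h := (convexOn_rpow_left (by norm_num : (0 : ℝ) < 3 / 2)).2 (mem_univ 1) (mem_univ 2)
      (by linarith : 0 ≤ 2 - θ) (by linarith : 0 ≤ θ - 1) (by ring)
    norm_num at h
    rwa [show 2 - θ + (θ - 1) * 2 = θ by ring] at h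
  have hpos : 0 < (3 / 2 : ℝ) ^ θ := by positivity
  rw [show (2 / 3 : ℝ) = (3 / 2)⁻¹ by norm_num, inv_rpow (by norm_num), ← div_eq_mul_inv,
    le_div_iff₀ hpos]
  nlinarith

theorem forall_ge_of_Icc_of_add {P : ℝ → Prop} {a d : ℝ} (hd : 0 < d)
    (base : ∀ x ∈ Icc a (a + d), P x) (step : ∀ x, a ≤ x → P x → P (x + d)) :
    ∀ x, a ≤ x → P x := by
  have up_to : ∀ n : ℕ, ∀ x ∈ Icc a (a + (n + 1) * d), P x := by
    intro n
    induction n with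
    | zero => simpa using base
    | succ n ih =>
      rintro x ⟨hax, hxn⟩
      push_cast at hxn
      have hn : (0 : ℝ) ≤ n := n.cast_nonneg
      rcases le_or_gt x (a + (n + 1) * d) with hx | hx
      · exact ih x ⟨hax, hx⟩
      · simpa using step (x - d) (by nlinarith) (ih (x - d) ⟨by nlinarith, by linarith⟩)
  intro x hx
  obtain ⟨n, hn⟩ := exists_nat_ge ((x - a) / d)
  rw [div_le_iff₀ hd] at hn
  exact up_to n x ⟨hx, by nlinarith⟩

noncomputable def phiIntegrand (γ s : ℝ) : ℝ := (s + 1) ^ (-(γ + 2) / 2) * (s + 2) ^ ((γ - 1) / 2)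

noncomputable def phiIntegral (γ : ℝ) : ℝ := ∫ s in Ioi 0, phiIntegrand γ s

noncomputable def phiBoundary (γ s : ℝ) : ℝ := (s + 1) ^ (-(γ + 2) / 2) * (s + 2) ^ ((γ + 1) / 2)

noncomputable def phi (γ : ℝ) : ℝ := 2 ^ ((1 - γ) / 2) * (γ / 2) * phiIntegral γ

theorem phiIntegrand_le {γ s : ℝ} (hγ : 1 ≤ γ) (hs : 0 ≤ s) :
    phiIntegrand γ s ≤ 2 ^ ((γ - 1) / 2) * (s + 1) ^ (-3 / 2 : ℝ) := by
  have h := add_one_rpow_mul_add_two_rpow_le hs (-(γ + 2) / 2) (by linarith : 0 ≤ (γ - 1) / 2)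
  rwa [show -(γ + 2) / 2 + (γ - 1) / 2 = -3 / 2 by ring] at h

theorem integrableOn_phiIntegrand {γ : ℝ} (hγ : 1 ≤ γ) : IntegrableOn (phiIntegrand γ) (Ioi 0) := by
  refine ((integrableOn_add_rpow_Ioi_of_lt (a := -3 / 2) (m := 1) (by norm_num)
    (by norm_num)).const_mul (2 ^ ((γ - 1) / 2))).mono' ?_ ?_
  · exact (by unfold phiIntegrand; fun_prop : Measurable (phiIntegrand γ)).aestronglyMeasurable
  · filter_upwards [ae_restrict_mem measurableSet_Ioi] with s hs
    have hs : 0 < s := hs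
    rw [norm_of_nonneg (by unfold phiIntegrand; positivity)]
    exact phiIntegrand_le hγ hs.le

theorem phiIntegral_one : phiIntegral 1 = 2 := by
  have h := integral_add_rpow_Ioi_of_lt (a := -3 / 2) (c := 0) (m := 1) (by norm_num) (by norm_num)
  have h₁ : phiIntegrand 1 = fun s ↦ (s + 1) ^ (-3 / 2 : ℝ) := by
    ext s
    norm_num [phiIntegrand]
  rw [phiIntegral, h₁, h]
  norm_num

theorem phiIntegral_three : phiIntegral 3 = 8 / 3 := by
  have h₃ := integral_add_rpow_Ioi_of_lt (a := -3 / 2) (c := 0) (m := 1) (by norm_num) (by norm_num)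
  have h₅ := integral_add_rpow_Ioi_of_lt (a := -5 / 2) (c := 0) (m := 1) (by norm_num) (by norm_num)
  have split : EqOn (phiIntegrand 3) (fun s ↦ (s + 1) ^ (-3 / 2 : ℝ) + (s + 1) ^ (-5 / 2 : ℝ))
      (Ioi 0) := by
    intro s hs
    have hs1 : s + 1 ≠ 0 := by linarith [mem_Ioi.mp hs]
    norm_num [phiIntegrand]
    rw [show (-(3 / 2) : ℝ) = -(5 / 2) + 1 by norm_num, rpow_add_one hs1]
    ring
  rw [phiIntegral, setIntegral_congr_fun measurableSet_Ioi split,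
    integral_add (integrableOn_add_rpow_Ioi_of_lt (by norm_num) (by norm_num))
      (integrableOn_add_rpow_Ioi_of_lt (by norm_num) (by norm_num)), h₃, h₅]
  norm_num

theorem phiIntegrand_eq (γ : ℝ) {s : ℝ} (hs : -1 < s) :
    phiIntegrand γ s = (s + 1) ^ (-3 / 2 : ℝ) * ((s + 2) / (s + 1)) ^ ((γ - 1) / 2) := by
  have hs1 : 0 < s + 1 := by linarith
  rw [phiIntegrand, div_rpow (by linarith) hs1.le, show -(γ + 2) / 2 = -3 / 2 - (γ - 1) / 2 by ring,
    rpow_sub hs1]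
  ring

theorem phiIntegrand_ge {γ s : ℝ} (hγ : 3 ≤ γ) (hs : 0 < s) :
    (4 / 3) ^ ((γ - 1) / 2) * ((1 - (γ - 1) / 2) * phiIntegrand 1 s
      + (3 / 4 * ((γ - 1) / 2)) * phiIntegrand 3 s) ≤ phiIntegrand γ s := by
  have tangent := mul_one_add_mul_le_rpow (c := 4 / 3) (t := (s + 2) / (s + 1)) (θ := (γ - 1) / 2)
    (by norm_num) (by positivity) (by linarith)
  rw [phiIntegrand_eq 1 (by linarith), phiIntegrand_eq 3 (by linarith),
    phiIntegrand_eq γ (by linarith), show ((1 : ℝ) - 1) / 2 = 0 by norm_num,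
    show ((3 : ℝ) - 1) / 2 = 1 by norm_num, rpow_zero, rpow_one]
  calc _ = (s + 1) ^ (-3 / 2 : ℝ) * ((4 / 3) ^ ((γ - 1) / 2)
          * (1 + (γ - 1) / 2 * ((s + 2) / (s + 1) / (4 / 3) - 1))) := by
        ring
    _ ≤ _ := mul_le_mul_of_nonneg_left tangent (by positivity)

theorem phiIntegral_ge {γ : ℝ} (hγ : 3 ≤ γ) : 2 * (4 / 3) ^ ((γ - 1) / 2) ≤ phiIntegral γ := by
  have h₁ := integrableOn_phiIntegrand (le_refl 1)
  have h₃ := integrableOn_phiIntegrand (by norm_num : (1 : ℝ) ≤ 3)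
  calc 2 * (4 / 3) ^ ((γ - 1) / 2)
      = (4 / 3) ^ ((γ - 1) / 2) * ((1 - (γ - 1) / 2) * phiIntegral 1
          + (3 / 4 * ((γ - 1) / 2)) * phiIntegral 3) := by
        rw [phiIntegral_one, phiIntegral_three]
        ring
    _ = ∫ s in Ioi 0, (4 / 3) ^ ((γ - 1) / 2) * ((1 - (γ - 1) / 2) * phiIntegrand 1 s
          + (3 / 4 * ((γ - 1) / 2)) * phiIntegrand 3 s) := by
        rw [integral_const_mul, integral_add (h₁.const_mul _) (h₃.const_mul _), integral_const_mul,
          integral_const_mul, phiIntegral, phiIntegral]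
    _ ≤ phiIntegral γ :=
        setIntegral_mono_on (((h₁.const_mul _).add (h₃.const_mul _)).const_mul _)
          (integrableOn_phiIntegrand (by linarith)) measurableSet_Ioi
          fun s hs ↦ phiIntegrand_ge hγ hs

theorem hasDerivAt_phiBoundary (γ : ℝ) {x : ℝ} (hx : -1 < x) :
    HasDerivAt (phiBoundary γ)
      (-((γ + 2) / 2) * phiIntegrand (γ + 2) x + (γ + 1) / 2 * phiIntegrand γ x) x := by
  have d₁ := ((hasDerivAt_id' x).add_const 1).rpow_const (p := -(γ + 2) / 2) (Or.inl (by linarith))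
  have d₂ := ((hasDerivAt_id' x).add_const 2).rpow_const (p := (γ + 1) / 2) (Or.inl (by linarith))
  refine (d₁.mul d₂).congr_deriv ?_
  rw [phiIntegrand, phiIntegrand, show -(γ + 2 + 2) / 2 = -(γ + 2) / 2 - 1 by ring,
    show (γ + 2 - 1) / 2 = (γ + 1) / 2 by ring, show (γ - 1) / 2 = (γ + 1) / 2 - 1 by ring]
  ring

theorem tendsto_phiBoundary_atTop {γ : ℝ} (hγ : -1 ≤ γ) :
    Tendsto (phiBoundary γ) atTop (𝓝 0) := by
  have hb : 0 ≤ (γ + 1) / 2 := by linarith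
  have decay : Tendsto (fun s : ℝ ↦ (2 : ℝ) ^ ((γ + 1) / 2) * (s + 1) ^ (-(1 / 2) : ℝ)) atTop
      (𝓝 0) := by
    simpa using ((tendsto_rpow_neg_atTop (by norm_num : (0 : ℝ) < 1 / 2)).comp
      (tendsto_atTop_add_const_right _ 1 tendsto_id)).const_mul ((2 : ℝ) ^ ((γ + 1) / 2))
  refine tendsto_of_tendsto_of_tendsto_of_le_of_le' tendsto_const_nhds decay ?_ ?_
  · filter_upwards [eventually_ge_atTop 0] with s hs
    have : 0 < s + 1 := by linarith
    unfold phiBoundary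
    positivity
  · filter_upwards [eventually_ge_atTop 0] with s hs
    have h := add_one_rpow_mul_add_two_rpow_le hs (-(γ + 2) / 2) hb
    rwa [show -(γ + 2) / 2 + (γ + 1) / 2 = -(1 / 2) by ring] at h

theorem phiIntegral_add_two {γ : ℝ} (hγ : 1 ≤ γ) :
    (γ + 2) / 2 * phiIntegral (γ + 2) = 2 ^ ((γ + 1) / 2) + (γ + 1) / 2 * phiIntegral γ := by
  have h₂ := (integrableOn_phiIntegrand (by linarith : 1 ≤ γ + 2)).const_mul (-((γ + 2) / 2))
  have h₀ := (integrableOn_phiIntegrand hγ).const_mul ((γ + 1) / 2)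
  have ftc := integral_Ioi_of_hasDerivAt_of_tendsto'
    (fun x hx ↦ hasDerivAt_phiBoundary γ (by linarith [mem_Ici.mp hx])) (h₂.add h₀)
    (tendsto_phiBoundary_atTop (by linarith))
  have boundary_zero : phiBoundary γ 0 = 2 ^ ((γ + 1) / 2) := by norm_num [phiBoundary]
  rw [integral_add h₂ h₀, integral_const_mul, integral_const_mul, boundary_zero] at ftc
  rw [phiIntegral, phiIntegral]
  linarith

theorem phi_add_two {γ : ℝ} (hγ : 1 ≤ γ) : phi (γ + 2) = 1 + (γ + 1) / (2 * γ) * phi γ := by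
  have h2 : (2 : ℝ) ^ ((1 - γ) / 2) = 2 ^ ((1 - (γ + 2)) / 2) * 2 := by
    rw [show (1 - γ) / 2 = (1 - (γ + 2)) / 2 + 1 by ring, rpow_add_one two_ne_zero]
  have h1 : (2 : ℝ) ^ ((1 - (γ + 2)) / 2) * 2 ^ ((γ + 1) / 2) = 1 := by
    rw [← rpow_add two_pos, show (1 - (γ + 2)) / 2 + (γ + 1) / 2 = 0 by ring, rpow_zero]
  have hγ0 : γ ≠ 0 := by linarith
  rw [phi, phi, mul_assoc, phiIntegral_add_two hγ, h2]
  field_simp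
  linear_combination 2 * h1

theorem two_le_phi_add_two {γ : ℝ} (hγ : 1 ≤ γ) (h : 2 ≤ phi γ) : 2 ≤ phi (γ + 2) := by
  have hγ0 : 0 < γ := by linarith
  calc (2 : ℝ) ≤ 1 + (γ + 1) / (2 * γ) * 2 := by
        rw [div_mul_eq_mul_div, ← sub_le_iff_le_add', le_div_iff₀ (by positivity)]
        linarith
    _ ≤ phi (γ + 2) := by
        rw [phi_add_two hγ]
        gcongr

theorem mul_two_thirds_rpow_le_phi {γ : ℝ} (hγ : 3 ≤ γ) : γ * (2 / 3) ^ ((γ - 1) / 2) ≤ phi γ := by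
  have h4 : (4 / 3 : ℝ) ^ ((γ - 1) / 2) = 2 ^ ((γ - 1) / 2) * (2 / 3) ^ ((γ - 1) / 2) := by
    rw [← mul_rpow (by norm_num) (by norm_num)]
    norm_num
  have h2 : (2 : ℝ) ^ ((1 - γ) / 2) * 2 ^ ((γ - 1) / 2) = 1 := by
    rw [← rpow_add two_pos, show (1 - γ) / 2 + (γ - 1) / 2 = 0 by ring, rpow_zero]
  calc γ * (2 / 3) ^ ((γ - 1) / 2)
      = 2 ^ ((1 - γ) / 2) * (γ / 2) * (2 * (4 / 3) ^ ((γ - 1) / 2)) := by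
        rw [h4]
        linear_combination (-γ * (2 / 3) ^ ((γ - 1) / 2)) * h2
    _ ≤ phi γ := by
        unfold phi
        gcongr
        exact phiIntegral_ge hγ

/-- For `γ ∈ [3,5]`, `φ(γ) ≥ γ·(2/3)^{(γ-1)/2} ≥ 2`, and (via the recursion
`φ(γ+2) = 1 + ((γ+1)/(2γ))φ(γ)`) one obtains `φ(γ) ≥ 2` for all `γ ≥ 3`, where
`φ(γ) = 2^{(1-γ)/2}·(γ/2)·∫_0^∞ (s+1)^{-(γ+2)/2}(s+2)^{(γ-1)/2} ds`. -/
theorem phi_ge_two (φ : ℝ → ℝ)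
    (hφ : ∀ g : ℝ, φ g = 2 ^ ((1 - g) / 2) * (g / 2) *
      ∫ s in Set.Ioi (0 : ℝ), (s + 1) ^ (-(g + 2) / 2) * (s + 2) ^ ((g - 1) / 2)) :
    (∀ γ ∈ Set.Icc (3 : ℝ) 5,
      φ γ ≥ γ * (2 / 3) ^ ((γ - 1) / 2) ∧ γ * (2 / 3) ^ ((γ - 1) / 2) ≥ 2) ∧
    (∀ γ : ℝ, 3 ≤ γ → φ γ ≥ 2) := by
  obtain rfl : φ = phi := funext hφ
  have two_le_of_Icc (γ : ℝ) (hγ : γ ∈ Icc (3 : ℝ) 5) : 2 ≤ γ * (2 / 3) ^ ((γ - 1) / 2) :=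
    two_le_mul_two_thirds_rpow hγ.1 hγ.2
  refine ⟨fun γ hγ ↦ ⟨mul_two_thirds_rpow_le_phi hγ.1, two_le_of_Icc γ hγ⟩, ?_⟩
  refine forall_ge_of_Icc_of_add two_pos (fun γ hγ ↦ ?_) fun γ hγ h ↦ ?_
  · norm_num at hγ
    exact (two_le_of_Icc γ hγ).trans (mul_two_thirds_rpow_le_phi hγ.1)
  · exact two_le_phi_add_two (by linarith) h
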